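/- arXiv:1404.3068 — 5 statements merged into one kernel-verified Lean document; each statement's English description precedes it below -/
import Mathlib

section
/- Let 1 < p_A, p_B < ∞, let a, b ∈ ℝ^d satisfy αᵀa < β and αᵀb > β, and let ω_a, ω_b > 0. A point x* ∈ ℝ^d with αᵀx* = β minimizes the function x ↦ ω_a‖x − a‖_{p_A} + ω_b‖x − b‖_{p_B} over the hyperplane 𝓗 if and only if: (1) for every index j with α_j = 0, ω_a (|x*_j − a_j| / ‖x* − a‖_{p_A})^{p_A − 1} sgn(x*_j − a_j) + ω_b (|x*_j − b_j| / ‖x* − b‖_{p_B})^{p_B − 1} sgn(x*_j − b_j) = 0; and (2) for all indices i, j with α_i ≠ 0 and α_j ≠ 0, (1/α_i)[ω_a (|x*_i − a_i| / ‖x* − a‖_{p_A})^{p_A − 1} sgn(x*_i − a_i) + ω_b (|x*_i − b_i| / ‖x* − b‖_{p_B})^{p_B − 1} sgn(x*_i − b_i)] = (1/α_j)[ω_a (|x*_j − a_j| / ‖x* − a‖_{p_A})^{p_A − 1} sgn(x*_j − a_j) + ω_b (|x*_j − b_j| / ‖x* − b‖_{p_B})^{p_B − 1} sgn(x*_j −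 b_j)]. -/
/-!
The objective `F y = ωa ‖y - a‖_{pA} + ωb ‖y - b‖_{pB}` is convex, being a positive combination of
translated norms, and for `p > 1` it has directional derivatives at every `x ∉ {a, b}`, given by
`v ↦ g ⬝ᵥ v` with `g` the vector of the statement. A convex function restricted to the hyperplane
is minimal at `x` iff all its directional derivatives along `α^⊥` vanish, i.e. iff `g ⟂ α^⊥`;
this means `g` is a multiple of `α`, which is the componentwise condition.
-/

open scoped ENNReal BigOperators

/-- The `ℓ_p` norm on `ℝ^d` for a real exponent `p` (intended for `1 ≤ p < ∞`). -/
noncomputable def lpNormR {d : ℕ} (p : ℝ) (x : Fin d → ℝ) : ℝ :=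
  (∑ k, |x k| ^ p) ^ (1 / p)

open Set Matrix

theorem lpNormR_sub_eq_dist {d : ℕ} {p : ℝ} (hp : 0 < p) (x y : Fin d → ℝ) :
    lpNormR p (x - y) =
      dist (WithLp.toLp (ENNReal.ofReal p) x) (WithLp.toLp (ENNReal.ofReal p) y) := by
  have hp' : 0 < (ENNReal.ofReal p).toReal := by rwa [ENNReal.toReal_ofReal hp.le]
  rw [PiLp.dist_eq_sum hp', ENNReal.toReal_ofReal hp.le]
  simp [lpNormR, Real.dist_eq]

theorem convexOn_lpNormR_sub {d : ℕ} {p : ℝ} (hp : 1 ≤ p) (a : Fin d → ℝ) :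
    ConvexOn ℝ univ fun y => lpNormR p (y - a) := by
  have : Fact (1 ≤ ENNReal.ofReal p) := ⟨by simpa using hp⟩
  have := (convexOn_univ_dist (WithLp.toLp (ENNReal.ofReal p) a)).comp_linearMap
    (WithLp.linearEquiv (ENNReal.ofReal p) ℝ (Fin d → ℝ)).symm.toLinearMap
  convert this using 1 <;> try rfl
  ext y
  exact lpNormR_sub_eq_dist (by linarith) y a

theorem abs_rpow_sub_two_mul_self (x p : ℝ) :
    |x| ^ (p - 2) * x = |x| ^ (p - 1) * Real.sign x := by
  rcases eq_or_ne x 0 with rfl | hx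
  · simp
  have hpow : |x| ^ (p - 1) = |x| ^ (p - 2) * |x| := by
    rw [← Real.rpow_add_one (abs_ne_zero.2 hx)]
    ring_nf
  rcases hx.lt_or_gt with hx | hx
  · rw [hpow, Real.sign_of_neg hx, abs_of_neg hx]
    ring
  · rw [hpow, Real.sign_of_pos hx, abs_of_pos hx]
    ring

theorem Real.rpow_one_div_sub_one {S : ℝ} (hS : 0 ≤ S) {p : ℝ} (hp : p ≠ 0) :
    S ^ (1 / p - 1) = ((S ^ (1 / p)) ^ (p - 1))⁻¹ := by
  rw [← Real.rpow_mul hS, ← Real.rpow_neg hS]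
  congr 1
  field_simp
  ring

theorem hasLineDerivAt_lpNormR_sub {d : ℕ} {p : ℝ} (hp : 1 < p) {x a : Fin d → ℝ} (hxa : x ≠ a)
    (v : Fin d → ℝ) :
    HasLineDerivAt ℝ (fun y => lpNormR p (y - a))
      (∑ k, (|x k - a k| / lpNormR p (x - a)) ^ (p - 1) * Real.sign (x k - a k) * v k) x v := by
  have hp0 : p ≠ 0 := by positivity
  have hterm : ∀ k, HasDerivAt (fun t : ℝ => |(x + t • v - a) k| ^ p)
      (p * |x k - a k| ^ (p - 2) * (x k - a k) * v k) 0 := fun k => by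
    have hlin : HasDerivAt (fun t : ℝ => x k - a k + t * v k) (v k) 0 := by
      simpa using ((hasDerivAt_id (0 : ℝ)).mul_const (v k)).const_add (x k - a k)
    have hcomp : (fun t : ℝ => |(x + t • v - a) k| ^ p) =
        (fun s => |s| ^ p) ∘ fun t => x k - a k + t * v k := by
      ext t
      simp only [Pi.sub_apply, Pi.add_apply, Pi.smul_apply, smul_eq_mul, Function.comp_apply]
      ring_nf
    rw [hcomp]
    exact (hasDerivAt_abs_rpow (x k - a k) hp).comp_of_eq 0 hlin (by simp)
  obtain ⟨k₀, hk₀⟩ : ∃ k, x k - a k ≠ 0 := by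
    simpa [funext_iff, sub_eq_zero] using hxa
  set S := ∑ k, |x k - a k| ^ p with hS
  have hSpos : 0 < S := Finset.sum_pos' (fun k _ => by positivity)
    ⟨k₀, Finset.mem_univ _, by positivity⟩
  have hsum := (HasDerivAt.fun_sum fun k _ => hterm k).rpow_const (p := 1 / p)
    (Or.inl (by simpa [← hS] using hSpos.ne'))
  simp only [zero_smul, add_zero, Pi.sub_apply, ← hS] at hsum
  refine hsum.congr_deriv ?_
  have hN : lpNormR p (x - a) = S ^ (1 / p) := rfl
  rw [Finset.sum_mul, Finset.sum_mul, hN]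
  refine Finset.sum_congr rfl fun k _ => ?_
  rw [Real.div_rpow (abs_nonneg _) (by positivity), Real.rpow_one_div_sub_one hSpos.le hp0,
    mul_assoc p, abs_rpow_sub_two_mul_self]
  field_simp

theorem HasLineDerivAt.eq_zero_of_forall_le {E : Type*} [AddCommGroup E] [Module ℝ E]
    {f : E → ℝ} {f' : ℝ} {x v : E} (hf : HasLineDerivAt ℝ f f' x v)
    (hmin : ∀ t : ℝ, f x ≤ f (x + t • v)) : f' = 0 :=
  IsLocalMin.hasDerivAt_eq_zero (.of_forall fun t => by simpa using hmin t) hf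

theorem ConvexOn.le_of_hasLineDerivAt_eq_zero {E : Type*} [AddCommGroup E] [Module ℝ E]
    {s : Set E} {f : E → ℝ} (hf : ConvexOn ℝ s f) {x y : E} (hx : x ∈ s) (hy : y ∈ s)
    (hxy : HasLineDerivAt ℝ f 0 x (y - x)) : f x ≤ f y := by
  have hline : ∀ t : ℝ, AffineMap.lineMap x y t = x + t • (y - x) := fun t => by
    rw [AffineMap.lineMap_apply_module', add_comm]
  have hφ := hf.comp_affineMap (AffineMap.lineMap x y)
  have h := hφ.le_slope_of_hasDerivAt (x := 0) (y := 1) (by simpa using hx) (by simpa using hy)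
    zero_lt_one (by simp only [Function.comp_def, hline]; exact hxy)
  simpa [slope_def_field] using h

theorem forall_dotProduct_eq_zero_imp_iff {ι K : Type*} [Fintype ι] [DecidableEq ι] [Field K]
    {α g : ι → K} :
    (∀ v, α ⬝ᵥ v = 0 → g ⬝ᵥ v = 0) ↔
      (∀ j, α j = 0 → g j = 0) ∧ ∀ i j, α i ≠ 0 → α j ≠ 0 → 1 / α i * g i = 1 / α j * g j := by
  have cross : ∀ {i j}, α i ≠ 0 → α j ≠ 0 →
      (1 / α i * g i = 1 / α j * g j ↔ g i * α j = g j * α i) := fun hi hj => by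
    rw [one_div_mul_eq_div, one_div_mul_eq_div, div_eq_div_iff hi hj]
  constructor
  · intro h
    refine ⟨fun j hj => by simpa using h (Pi.single j 1) (by simpa using hj),
      fun i j hi hj => (cross hi hj).2 ?_⟩
    have := h (α i • Pi.single j 1 - α j • Pi.single i 1) (by simp [dotProduct_sub]; ring)
    simp only [dotProduct_sub, dotProduct_smul, dotProduct_single, mul_one, smul_eq_mul] at this
    linear_combination -this
  · rintro ⟨h0, h1⟩ v hv
    by_cases hα : ∃ i, α i ≠ 0
    · obtain ⟨i, hi⟩ := hα
      have hg : g = (g i / α i) • α := funext fun j => by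
        rw [Pi.smul_apply, smul_eq_mul, div_mul_eq_mul_div, eq_div_iff hi]
        by_cases hj : α j = 0
        · simp [hj, h0 j hj]
        · linear_combination -(cross hi hj).1 (h1 i j hi hj)
      rw [hg, smul_dotProduct, hv, smul_zero]
    · push Not at hα
      simp [funext fun j => h0 j (hα j)]

theorem stmt_0_general {d : ℕ} (pA pB : ℝ) (hpA : 1 < pA) (hpB : 1 < pB)
    (α : Fin d → ℝ) (β : ℝ)
    (a b : Fin d → ℝ) (ha : ∑ i, α i * a i < β) (hb : β < ∑ i, α i * b i)
    (ωa ωb : ℝ) (hωa : 0 < ωa) (hωb : 0 < ωb)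
    (x : Fin d → ℝ) (hx : ∑ i, α i * x i = β) :
    (∀ y : Fin d → ℝ, ∑ i, α i * y i = β →
        ωa * lpNormR pA (x - a) + ωb * lpNormR pB (x - b) ≤
          ωa * lpNormR pA (y - a) + ωb * lpNormR pB (y - b)) ↔
      ((∀ j, α j = 0 →
          ωa * (|x j - a j| / lpNormR pA (x - a)) ^ (pA - 1) * Real.sign (x j - a j) +
            ωb * (|x j - b j| / lpNormR pB (x - b)) ^ (pB - 1) * Real.sign (x j - b j) = 0) ∧
        ∀ i j, α i ≠ 0 → α j ≠ 0 →
          (1 / α i) *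
              (ωa * (|x i - a i| / lpNormR pA (x - a)) ^ (pA - 1) * Real.sign (x i - a i) +
                ωb * (|x i - b i| / lpNormR pB (x - b)) ^ (pB - 1) * Real.sign (x i - b i)) =
            (1 / α j) *
              (ωa * (|x j - a j| / lpNormR pA (x - a)) ^ (pA - 1) * Real.sign (x j - a j) +
                ωb * (|x j - b j| / lpNormR pB (x - b)) ^ (pB - 1) * Real.sign (x j - b j))) := by
  change α ⬝ᵥ x = β at hx
  have hxa : x ≠ a := by rintro rfl; exact ha.ne hx
  have hxb : x ≠ b := by rintro rfl; exact hb.ne' hx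
  let F : (Fin d → ℝ) → ℝ := fun y => ωa * lpNormR pA (y - a) + ωb * lpNormR pB (y - b)
  let g : Fin d → ℝ := fun j =>
    ωa * (|x j - a j| / lpNormR pA (x - a)) ^ (pA - 1) * Real.sign (x j - a j) +
      ωb * (|x j - b j| / lpNormR pB (x - b)) ^ (pB - 1) * Real.sign (x j - b j)
  have hF : ∀ v, HasLineDerivAt ℝ F (g ⬝ᵥ v) x v := fun v => by
    refine ((HasDerivAt.const_mul ωa (hasLineDerivAt_lpNormR_sub hpA hxa v)).add
      (HasDerivAt.const_mul ωb (hasLineDerivAt_lpNormR_sub hpB hxb v))).congr_deriv ?_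
    simp only [dotProduct, g, Finset.mul_sum, ← Finset.sum_add_distrib]
    exact Finset.sum_congr rfl fun j _ => by ring
  have hconv : ConvexOn ℝ univ F :=
    ((convexOn_lpNormR_sub hpA.le a).smul hωa.le).add ((convexOn_lpNormR_sub hpB.le b).smul hωb.le)
  change (∀ y, α ⬝ᵥ y = β → F x ≤ F y) ↔
    (∀ j, α j = 0 → g j = 0) ∧ ∀ i j, α i ≠ 0 → α j ≠ 0 → 1 / α i * g i = 1 / α j * g j
  rw [← forall_dotProduct_eq_zero_imp_iff]
  constructor
  · intro hmin v hv
    refine (hF v).eq_zero_of_forall_le fun t => hmin _ ?_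
    rw [dotProduct_add, dotProduct_smul, hv, smul_zero, add_zero, hx]
  · intro hg y hy
    have hline : g ⬝ᵥ (y - x) = 0 := hg _ (by rw [dotProduct_sub, hy, hx, sub_self])
    exact hconv.le_of_hasLineDerivAt_eq_zero (mem_univ x) (mem_univ y) (hline ▸ hF (y - x))

/-- Lemma 1 (optimality conditions for the gate point of the shortest weighted path
between `a` and `b` separated by the hyperplane `αᵀx = β`, with `1 < p_A, p_B < ∞`). -/
theorem stmt_0 {d : ℕ} (pA pB : ℝ) (hpA : 1 < pA) (hpB : 1 < pB)
    (α : Fin d → ℝ) (hα : α ≠ 0) (β : ℝ)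
    (a b : Fin d → ℝ) (ha : ∑ i, α i * a i < β) (hb : β < ∑ i, α i * b i)
    (ωa ωb : ℝ) (hωa : 0 < ωa) (hωb : 0 < ωb)
    (x : Fin d → ℝ) (hx : ∑ i, α i * x i = β) :
    (∀ y : Fin d → ℝ, ∑ i, α i * y i = β →
        ωa * lpNormR pA (x - a) + ωb * lpNormR pB (x - b) ≤
          ωa * lpNormR pA (y - a) + ωb * lpNormR pB (y - b)) ↔
      ((∀ j, α j = 0 →
          ωa * (|x j - a j| / lpNormR pA (x - a)) ^ (pA - 1) * Real.sign (x j - a j) +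
            ωb * (|x j - b j| / lpNormR pB (x - b)) ^ (pB - 1) * Real.sign (x j - b j) = 0) ∧
        ∀ i j, α i ≠ 0 → α j ≠ 0 →
          (1 / α i) *
              (ωa * (|x i - a i| / lpNormR pA (x - a)) ^ (pA - 1) * Real.sign (x i - a i) +
                ωb * (|x i - b i| / lpNormR pB (x - b)) ^ (pB - 1) * Real.sign (x i - b i)) =
            (1 / α j) *
              (ωa * (|x j - a j| / lpNormR pA (x - a)) ^ (pA - 1) * Real.sign (x j - a j) +
                ωb * (|x j - b j| / lpNormR pB (x - b)) ^ (pB - 1) * Real.sign (x j - b j))) :=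
  stmt_0_general pA pB hpA hpB α β a b ha hb ωa ωb hωa hωb x hx
end

section
/- Define v_A = inf { Σ_{a∈A} ω_a‖x − a‖_{p_A} + Σ_{b∈B} ω_b (‖x − y_b‖_{p_A} + ‖y_b − b‖_{p_B}) : x ∈ ℝ^d with αᵀx ≤ β, and y_b ∈ 𝓗 for all b ∈ B } and v_B = inf { Σ_{b∈B} ω_b‖x − b‖_{p_B} + Σ_{a∈A} ω_a (‖x − y_a‖_{p_B} + ‖y_a − a‖_{p_A}) : x ∈ ℝ^d with αᵀx ≥ β, and y_a ∈ 𝓗 for all a ∈ A }. Then the optimal value of Problem (P) equals min{v_A, v_B}; in particular, if x* is an optimal solution of (P), then x* is the x-component of an optimal solution of the restricted problem achieving this minimum. -/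
/-!
A point on the other side of `𝓗` is reached through a gate on `𝓗`, and by coercivity of the
norms the best gate exists. Hence for `αᵀx ≤ β` the objective `f x` is the objective of (P_A)
at `x` with optimal gates, and for `αᵀx > β` that of (P_B). For `x ∈ 𝓗` the value `f x` is still
at most the objective of (P_B) for any gates: `x` serves as its own gate for `B`, and each
`‖x - a‖_{p_A} ≤ ‖x - y_a‖_{p_B} + ‖y_a - a‖_{p_A}` because `‖·‖_{p_A} ≤ ‖·‖_{p_B}` for
`p_B ≤ p_A`. So every value of `f` is a value of (P_A) or (P_B), and every such value dominates
a value of `f`; this gives `inf f = min v_A v_B`, attained by the minimisers of `f`.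
-/

open scoped ENNReal BigOperators

/-- The `ℓ_p` norm on `ℝ^d` for `p : ℝ≥0∞` (intended for `1 ≤ p ≤ ∞`). -/
noncomputable def lpNorm {d : ℕ} (p : ℝ≥0∞) (x : Fin d → ℝ) : ℝ :=
  if p = ∞ then ⨆ k, |x k| else (∑ k, |x k| ^ p.toReal) ^ (1 / p.toReal)

/-- The mixed-norm shortest-path distance induced by the hyperplane `αᵀz = β`. -/
noncomputable def mixDist {d : ℕ} (pA pB : ℝ≥0∞) (α : Fin d → ℝ) (β : ℝ)
    (x y : Fin d → ℝ) : ℝ :=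
  if ∑ i, α i * x i ≤ β then
    (if ∑ i, α i * y i ≤ β then lpNorm pA (x - y)
     else ⨅ z : {z : Fin d → ℝ // ∑ i, α i * z i = β},
            lpNorm pA (z.1 - x) + lpNorm pB (z.1 - y))
  else
    (if ∑ i, α i * y i ≤ β then
       ⨅ z : {z : Fin d → ℝ // ∑ i, α i * z i = β},
         lpNorm pA (z.1 - y) + lpNorm pB (z.1 - x)
     else lpNorm pB (x - y))

open WithLp Filter Topology

theorem PiLp.norm_toLp_le_norm_toLp_of_le {ι : Type*} [Fintype ι] {β : ι → Type*}
    [∀ i, SeminormedAddCommGroup (β i)] {p q : ℝ≥0∞} [Fact (1 ≤ q)] (hqp : q ≤ p)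
    (x : ∀ i, β i) : ‖toLp p x‖ ≤ ‖toLp q x‖ := by
  have hle (i : ι) : ‖x i‖ ≤ ‖toLp q x‖ := PiLp.norm_apply_le (toLp q x) i
  rcases eq_or_ne p ∞ with rfl | hp
  · exact PiLp.norm_toLp x ▸ (pi_norm_le_iff_of_nonneg (norm_nonneg _)).2 hle
  have hq0 : 0 < q.toReal :=
    ENNReal.toReal_pos (zero_lt_one.trans_le Fact.out).ne' (ne_top_of_le_ne_top hp hqp)
  have hqp' : q.toReal ≤ p.toReal := ENNReal.toReal_mono hp hqp
  have hp0 : 0 < p.toReal := hq0.trans_le hqp'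
  have hS : ‖toLp q x‖ ^ q.toReal = ∑ i, ‖x i‖ ^ q.toReal := by
    rw [PiLp.norm_eq_sum hq0, ← Real.rpow_mul (by positivity), one_div_mul_cancel hq0.ne',
      Real.rpow_one]
  set S := ‖toLp q x‖
  -- each `‖x i‖ ≤ S`, so `‖x i‖ ^ p ≤ ‖x i‖ ^ q * S ^ (p - q)`
  have hsum : ∑ i, ‖x i‖ ^ p.toReal ≤ S ^ p.toReal :=
    calc ∑ i, ‖x i‖ ^ p.toReal = ∑ i, ‖x i‖ ^ q.toReal * ‖x i‖ ^ (p.toReal - q.toReal) := by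
          refine Finset.sum_congr rfl fun i _ => ?_
          rw [← Real.rpow_add' (norm_nonneg _) (by simpa using hp0.ne'), add_sub_cancel]
      _ ≤ ∑ i, ‖x i‖ ^ q.toReal * S ^ (p.toReal - q.toReal) := by
          gcongr with i
          exact hle i
      _ = S ^ p.toReal := by
          rw [← Finset.sum_mul, ← hS, ← Real.rpow_add' (norm_nonneg _) (by simpa using hp0.ne'),
            add_sub_cancel]
  rw [PiLp.norm_eq_sum hp0]
  calc (∑ i, ‖toLp p x i‖ ^ p.toReal) ^ (1 / p.toReal) ≤ (S ^ p.toReal) ^ (1 / p.toReal) := by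
        gcongr
    _ = S := by rw [← Real.rpow_mul (norm_nonneg _), mul_one_div_cancel hp0.ne', Real.rpow_one]

section LpNorm

variable {d : ℕ} {p q : ℝ≥0∞} [Fact (1 ≤ p)]

theorem lpNorm_eq_norm_toLp (x : Fin d → ℝ) : lpNorm p x = ‖toLp p x‖ := by
  unfold lpNorm
  split_ifs with h
  · subst h; rfl
  · simp [PiLp.norm_eq_sum (ENNReal.toReal_pos (one_pos.trans_le Fact.out).ne' h),
      Real.norm_eq_abs]

theorem lpNorm_nonneg (x : Fin d → ℝ) : 0 ≤ lpNorm p x := by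
  rw [lpNorm_eq_norm_toLp]; exact norm_nonneg _

theorem lpNorm_sub_comm (x y : Fin d → ℝ) : lpNorm p (x - y) = lpNorm p (y - x) := by
  simp only [lpNorm_eq_norm_toLp, toLp_sub, norm_sub_rev]

theorem lpNorm_zero : lpNorm p (0 : Fin d → ℝ) = 0 := by
  simp [lpNorm_eq_norm_toLp]

theorem lpNorm_sub_le_lpNorm_sub_add_lpNorm_sub (x y z : Fin d → ℝ) :
    lpNorm p (x - z) ≤ lpNorm p (x - y) + lpNorm p (y - z) := by
  simp only [lpNorm_eq_norm_toLp, toLp_sub]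
  exact norm_sub_le_norm_sub_add_norm_sub _ _ _

theorem lpNorm_le_lpNorm [Fact (1 ≤ q)] (hqp : q ≤ p) (x : Fin d → ℝ) :
    lpNorm p x ≤ lpNorm q x := by
  rw [lpNorm_eq_norm_toLp, lpNorm_eq_norm_toLp]
  exact PiLp.norm_toLp_le_norm_toLp_of_le hqp x

theorem norm_le_lpNorm (x : Fin d → ℝ) : ‖x‖ ≤ lpNorm p x := by
  calc ‖x‖ = lpNorm ∞ x := by rw [lpNorm_eq_norm_toLp, PiLp.norm_toLp]
    _ ≤ lpNorm p x := lpNorm_le_lpNorm le_top x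

theorem continuous_lpNorm_sub_const (u : Fin d → ℝ) : Continuous fun z => lpNorm p (z - u) := by
  simp only [lpNorm_eq_norm_toLp]
  fun_prop

theorem tendsto_lpNorm_sub_const_cocompact (u : Fin d → ℝ) :
    Tendsto (fun z => lpNorm p (z - u)) (cocompact _) atTop :=
  tendsto_atTop_mono (fun z => (dist_eq_norm z u).trans_le (norm_le_lpNorm _))
    (tendsto_dist_right_cocompact_atTop u)

end LpNorm

section Hyperplane

variable {d : ℕ} {p q : ℝ≥0∞} [Fact (1 ≤ p)] [Fact (1 ≤ q)] {α : Fin d → ℝ} {β : ℝ}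

theorem exists_mem_hyperplane (hα : α ≠ 0) (β : ℝ) : ∃ z : Fin d → ℝ, ∑ i, α i * z i = β := by
  obtain ⟨i, hi⟩ := Function.ne_iff.1 hα
  exact ⟨Pi.single i (β / α i), by simp [Pi.single_apply, mul_div_cancel₀ _ hi]⟩

theorem isClosed_hyperplane (α : Fin d → ℝ) (β : ℝ) :
    IsClosed {z : Fin d → ℝ | ∑ i, α i * z i = β} :=
  isClosed_eq (by fun_prop) continuous_const

theorem exists_isMinOn_lpNorm_add_lpNorm {S : Set (Fin d → ℝ)} (hS : IsClosed S)
    (hne : S.Nonempty) (u v : Fin d → ℝ) :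
    ∃ z ∈ S, IsMinOn (fun z => lpNorm p (z - u) + lpNorm q (z - v)) S z := by
  obtain ⟨z₀, hz₀⟩ := hne
  have hcoercive : Tendsto (fun z => lpNorm p (z - u) + lpNorm q (z - v)) (cocompact _) atTop :=
    tendsto_atTop_mono (fun _ => le_add_of_nonneg_right (lpNorm_nonneg _))
      (tendsto_lpNorm_sub_const_cocompact u)
  exact ((continuous_lpNorm_sub_const u).add (continuous_lpNorm_sub_const v)).continuousOn
    |>.exists_isMinOn' hS hz₀ ((hcoercive.eventually_ge_atTop _).filter_mono inf_le_left)

theorem iInf_hyperplane_le (u v : Fin d → ℝ) {z : Fin d → ℝ} (hz : ∑ i, α i * z i = β) :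
    ⨅ z : {z : Fin d → ℝ // ∑ i, α i * z i = β}, lpNorm p (z.1 - u) + lpNorm q (z.1 - v) ≤
      lpNorm p (z - u) + lpNorm q (z - v) :=
  ciInf_le ⟨0, Set.forall_mem_range.2 fun _ => add_nonneg (lpNorm_nonneg _) (lpNorm_nonneg _)⟩
    (⟨z, hz⟩ : {z : Fin d → ℝ // ∑ i, α i * z i = β})

theorem exists_iInf_hyperplane_eq (hα : α ≠ 0) (u v : Fin d → ℝ) :
    ∃ z : Fin d → ℝ, ∑ i, α i * z i = β ∧
      ⨅ z : {z : Fin d → ℝ // ∑ i, α i * z i = β}, lpNorm p (z.1 - u) + lpNorm q (z.1 - v) =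
        lpNorm p (z - u) + lpNorm q (z - v) := by
  obtain ⟨z, hz, hmin⟩ := exists_isMinOn_lpNorm_add_lpNorm (p := p) (q := q)
    (isClosed_hyperplane α β) (exists_mem_hyperplane hα β) u v
  exact ⟨z, hz, hmin.iInf_eq hz⟩

end Hyperplane

section MixDist

variable {d : ℕ} {pA pB : ℝ≥0∞} {α : Fin d → ℝ} {β : ℝ} {x y a b : Fin d → ℝ}

theorem mixDist_of_le_of_le (hx : ∑ i, α i * x i ≤ β) (ha : ∑ i, α i * a i ≤ β) :
    mixDist pA pB α β x a = lpNorm pA (x - a) := by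
  simp only [mixDist, if_pos hx, if_pos ha]

theorem mixDist_of_lt_of_lt (hx : β < ∑ i, α i * x i) (hb : β < ∑ i, α i * b i) :
    mixDist pA pB α β x b = lpNorm pB (x - b) := by
  simp only [mixDist, if_neg hx.not_ge, if_neg hb.not_ge]

theorem mixDist_of_le_of_lt (hx : ∑ i, α i * x i ≤ β) (hb : β < ∑ i, α i * b i) :
    mixDist pA pB α β x b = ⨅ z : {z : Fin d → ℝ // ∑ i, α i * z i = β},
      lpNorm pA (z.1 - x) + lpNorm pB (z.1 - b) := by
  simp only [mixDist, if_pos hx, if_neg hb.not_ge]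

theorem mixDist_of_lt_of_le (hx : β < ∑ i, α i * x i) (ha : ∑ i, α i * a i ≤ β) :
    mixDist pA pB α β x a = ⨅ z : {z : Fin d → ℝ // ∑ i, α i * z i = β},
      lpNorm pA (z.1 - a) + lpNorm pB (z.1 - x) := by
  simp only [mixDist, if_neg hx.not_ge, if_pos ha]

variable [Fact (1 ≤ pA)] [Fact (1 ≤ pB)]

theorem mixDist_le_of_le_of_lt (hx : ∑ i, α i * x i ≤ β) (hb : β < ∑ i, α i * b i)
    (hy : ∑ i, α i * y i = β) :
    mixDist pA pB α β x b ≤ lpNorm pA (x - y) + lpNorm pB (y - b) := by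
  rw [mixDist_of_le_of_lt hx hb, lpNorm_sub_comm x]
  exact iInf_hyperplane_le x b hy

theorem exists_mixDist_eq_of_le_of_lt (hα : α ≠ 0) (hx : ∑ i, α i * x i ≤ β)
    (hb : β < ∑ i, α i * b i) :
    ∃ y, ∑ i, α i * y i = β ∧ mixDist pA pB α β x b = lpNorm pA (x - y) + lpNorm pB (y - b) := by
  obtain ⟨y, hy, heq⟩ := exists_iInf_hyperplane_eq (p := pA) (q := pB) (β := β) hα x b
  exact ⟨y, hy, by rw [mixDist_of_le_of_lt hx hb, heq, lpNorm_sub_comm y]⟩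

theorem mixDist_le_of_lt_of_le (hx : β < ∑ i, α i * x i) (ha : ∑ i, α i * a i ≤ β)
    (hy : ∑ i, α i * y i = β) :
    mixDist pA pB α β x a ≤ lpNorm pB (x - y) + lpNorm pA (y - a) := by
  rw [mixDist_of_lt_of_le hx ha, lpNorm_sub_comm x, add_comm]
  exact iInf_hyperplane_le a x hy

theorem exists_mixDist_eq_of_lt_of_le (hα : α ≠ 0) (hx : β < ∑ i, α i * x i)
    (ha : ∑ i, α i * a i ≤ β) :
    ∃ y, ∑ i, α i * y i = β ∧ mixDist pA pB α β x a = lpNorm pB (x - y) + lpNorm pA (y - a) := by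
  obtain ⟨y, hy, heq⟩ := exists_iInf_hyperplane_eq (p := pA) (q := pB) (β := β) hα a x
  exact ⟨y, hy, by rw [mixDist_of_lt_of_le hx ha, heq, lpNorm_sub_comm y x, add_comm]⟩

theorem mixDist_le_of_ge_of_le (hBA : pB ≤ pA) (hx : β ≤ ∑ i, α i * x i)
    (ha : ∑ i, α i * a i ≤ β) (hy : ∑ i, α i * y i = β) :
    mixDist pA pB α β x a ≤ lpNorm pB (x - y) + lpNorm pA (y - a) := by
  rcases hx.lt_or_eq with hx | hx
  · exact mixDist_le_of_lt_of_le hx ha hy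
  rw [mixDist_of_le_of_le hx.ge ha]
  exact (lpNorm_sub_le_lpNorm_sub_add_lpNorm_sub x y a).trans
    (add_le_add (lpNorm_le_lpNorm hBA _) le_rfl)

theorem mixDist_le_of_ge_of_lt (hx : β ≤ ∑ i, α i * x i) (hb : β < ∑ i, α i * b i) :
    mixDist pA pB α β x b ≤ lpNorm pB (x - b) := by
  rcases hx.lt_or_eq with hx | hx
  · exact (mixDist_of_lt_of_lt hx hb).le
  exact (mixDist_le_of_le_of_lt hx.ge hb hx.symm).trans_eq
    (by rw [sub_self, lpNorm_zero, zero_add])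

end MixDist

section Costs

variable {d : ℕ}

noncomputable def mixCost (pA pB : ℝ≥0∞) (α : Fin d → ℝ) (β : ℝ) (A B : Finset (Fin d → ℝ))
    (ω : (Fin d → ℝ) → ℝ) (x : Fin d → ℝ) : ℝ :=
  (∑ a ∈ A, ω a * mixDist pA pB α β x a) + ∑ b ∈ B, ω b * mixDist pA pB α β x b

/-- The objective of the restricted problem (P_A), with gate `y b ∈ 𝓗` for `b ∈ B`; the objective
of (P_B) is `gatewayCost pB pA B A ω`. -/
noncomputable def gatewayCost (p q : ℝ≥0∞) (A B : Finset (Fin d → ℝ)) (ω : (Fin d → ℝ) → ℝ)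
    (x : Fin d → ℝ) (y : (Fin d → ℝ) → Fin d → ℝ) : ℝ :=
  (∑ a ∈ A, ω a * lpNorm p (x - a)) + ∑ b ∈ B, ω b * (lpNorm p (x - y b) + lpNorm q (y b - b))

variable {pA pB : ℝ≥0∞} [Fact (1 ≤ pA)] [Fact (1 ≤ pB)] {α : Fin d → ℝ} {β : ℝ}
  {A B : Finset (Fin d → ℝ)} {ω : (Fin d → ℝ) → ℝ} {x : Fin d → ℝ} {y : (Fin d → ℝ) → Fin d → ℝ}

theorem gatewayCost_nonneg (hωA : ∀ a ∈ A, 0 ≤ ω a) (hωB : ∀ b ∈ B, 0 ≤ ω b) :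
    0 ≤ gatewayCost pA pB A B ω x y :=
  add_nonneg (Finset.sum_nonneg fun a ha => mul_nonneg (hωA a ha) (lpNorm_nonneg _))
    (Finset.sum_nonneg fun b hb =>
      mul_nonneg (hωB b hb) (add_nonneg (lpNorm_nonneg _) (lpNorm_nonneg _)))

theorem mixCost_le_gatewayCost_of_le (hAH : ∀ a ∈ A, ∑ i, α i * a i ≤ β)
    (hBH : ∀ b ∈ B, β < ∑ i, α i * b i) (hωB : ∀ b ∈ B, 0 ≤ ω b) (hx : ∑ i, α i * x i ≤ β)
    (hy : ∀ b ∈ B, ∑ i, α i * y b i = β) :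
    mixCost pA pB α β A B ω x ≤ gatewayCost pA pB A B ω x y := by
  refine add_le_add (Finset.sum_congr rfl fun a ha => ?_).le
    (Finset.sum_le_sum fun b hb => mul_le_mul_of_nonneg_left ?_ (hωB b hb))
  · rw [mixDist_of_le_of_le hx (hAH a ha)]
  · exact mixDist_le_of_le_of_lt hx (hBH b hb) (hy b hb)

theorem exists_gatewayCost_eq_mixCost_of_le (hα : α ≠ 0) (hAH : ∀ a ∈ A, ∑ i, α i * a i ≤ β)
    (hBH : ∀ b ∈ B, β < ∑ i, α i * b i) (hx : ∑ i, α i * x i ≤ β) :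
    ∃ y : (Fin d → ℝ) → Fin d → ℝ, (∀ b ∈ B, ∑ i, α i * y b i = β) ∧
      gatewayCost pA pB A B ω x y = mixCost pA pB α β A B ω x := by
  choose! y hyH hy using fun b hb =>
    exists_mixDist_eq_of_le_of_lt (pA := pA) (pB := pB) hα hx (hBH b hb)
  refine ⟨y, hyH, congr_arg₂ (· + ·) (Finset.sum_congr rfl fun a ha => ?_)
    (Finset.sum_congr rfl fun b hb => ?_)⟩
  · rw [mixDist_of_le_of_le hx (hAH a ha)]
  · rw [hy b hb]

theorem mixCost_le_gatewayCost_of_ge (hBA : pB ≤ pA) (hAH : ∀ a ∈ A, ∑ i, α i * a i ≤ β)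
    (hBH : ∀ b ∈ B, β < ∑ i, α i * b i) (hωA : ∀ a ∈ A, 0 ≤ ω a) (hωB : ∀ b ∈ B, 0 ≤ ω b)
    (hx : β ≤ ∑ i, α i * x i) (hy : ∀ a ∈ A, ∑ i, α i * y a i = β) :
    mixCost pA pB α β A B ω x ≤ gatewayCost pB pA B A ω x y := by
  rw [mixCost, add_comm]
  exact add_le_add
    (Finset.sum_le_sum fun b hb =>
      mul_le_mul_of_nonneg_left (mixDist_le_of_ge_of_lt hx (hBH b hb)) (hωB b hb))
    (Finset.sum_le_sum fun a ha =>
      mul_le_mul_of_nonneg_left (mixDist_le_of_ge_of_le hBA hx (hAH a ha) (hy a ha)) (hωA a ha))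

theorem exists_gatewayCost_eq_mixCost_of_lt (hα : α ≠ 0) (hAH : ∀ a ∈ A, ∑ i, α i * a i ≤ β)
    (hBH : ∀ b ∈ B, β < ∑ i, α i * b i) (hx : β < ∑ i, α i * x i) :
    ∃ y : (Fin d → ℝ) → Fin d → ℝ, (∀ a ∈ A, ∑ i, α i * y a i = β) ∧
      gatewayCost pB pA B A ω x y = mixCost pA pB α β A B ω x := by
  choose! y hyH hy using fun a ha =>
    exists_mixDist_eq_of_lt_of_le (pA := pA) (pB := pB) hα hx (hAH a ha)
  refine ⟨y, hyH, (add_comm _ _).trans (congr_arg₂ (· + ·) (Finset.sum_congr rfl fun a ha => ?_)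
    (Finset.sum_congr rfl fun b hb => ?_))⟩
  · rw [hy a ha]
  · rw [mixDist_of_lt_of_lt hx (hBH b hb)]

theorem exists_gatewayCost_eq_mixCost (hα : α ≠ 0) (hAH : ∀ a ∈ A, ∑ i, α i * a i ≤ β)
    (hBH : ∀ b ∈ B, β < ∑ i, α i * b i) (x : Fin d → ℝ) :
    (∑ i, α i * x i ≤ β ∧ ∃ y : (Fin d → ℝ) → Fin d → ℝ, (∀ b ∈ B, ∑ i, α i * y b i = β) ∧
        gatewayCost pA pB A B ω x y = mixCost pA pB α β A B ω x) ∨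
      (β ≤ ∑ i, α i * x i ∧ ∃ y : (Fin d → ℝ) → Fin d → ℝ, (∀ a ∈ A, ∑ i, α i * y a i = β) ∧
        gatewayCost pB pA B A ω x y = mixCost pA pB α β A B ω x) :=
  (le_or_gt _ β).imp (fun hx => ⟨hx, exists_gatewayCost_eq_mixCost_of_le hα hAH hBH hx⟩)
    fun hx => ⟨hx.le, exists_gatewayCost_eq_mixCost_of_lt hα hAH hBH hx⟩

end Costs

theorem iInf_eq_min_csInf_of_forall_mem_union {X : Type*} [Nonempty X] {F : X → ℝ}
    {S T : Set ℝ} (hS : S.Nonempty) (hT : T.Nonempty) (hSb : BddBelow S) (hTb : BddBelow T)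
    (hmem : ∀ x, F x ∈ S ∪ T) (hle : ∀ v ∈ S ∪ T, ∃ x, F x ≤ v) :
    ⨅ x, F x = min (sInf S) (sInf T) := by
  have hbdd : BddBelow (Set.range F) :=
    (hSb.union hTb).mono (Set.range_subset_iff.2 hmem)
  have hle_csInf {U : Set ℝ} (hU : U.Nonempty) (hUST : U ⊆ S ∪ T) : ⨅ x, F x ≤ sInf U :=
    le_csInf hU fun v hv => (hle v (hUST hv)).elim fun x hx => (ciInf_le hbdd x).trans hx
  refine le_antisymm (le_min (hle_csInf hS Set.subset_union_left)
    (hle_csInf hT Set.subset_union_right)) (le_ciInf fun x => ?_)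
  rcases hmem x with hx | hx
  · exact (min_le_left _ _).trans (csInf_le hSb hx)
  · exact (min_le_right _ _).trans (csInf_le hTb hx)

/-- Theorem 3: the optimal value of problem (P) equals `min {v_A, v_B}`, where
`v_A` (resp. `v_B`) is the optimal value of the restricted problem (P_A)
(resp. (P_B)); in particular, an optimal solution `x*` of (P) is the
`x`-component of an optimal solution of the restricted problem achieving the
minimum. -/
theorem stmt_4 {d : ℕ} (pA pB : ℝ≥0∞) (hpB : 1 ≤ pB) (hBA : pB ≤ pA)
    (α : Fin d → ℝ) (hα : α ≠ 0) (β : ℝ)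
    (A B : Finset (Fin d → ℝ))
    (hAH : ∀ a ∈ A, ∑ i, α i * a i ≤ β) (hBH : ∀ b ∈ B, β < ∑ i, α i * b i)
    (ω : (Fin d → ℝ) → ℝ) (hωA : ∀ a ∈ A, 0 < ω a) (hωB : ∀ b ∈ B, 0 < ω b)
    (vA vB : ℝ)
    (hvA : vA = sInf {v : ℝ | ∃ (x : Fin d → ℝ) (y : (Fin d → ℝ) → Fin d → ℝ),
        (∑ i, α i * x i ≤ β) ∧ (∀ b ∈ B, ∑ i, α i * y b i = β) ∧
        v = (∑ a ∈ A, ω a * lpNorm pA (x - a)) +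
          ∑ b ∈ B, ω b * (lpNorm pA (x - y b) + lpNorm pB (y b - b))})
    (hvB : vB = sInf {v : ℝ | ∃ (x : Fin d → ℝ) (y : (Fin d → ℝ) → Fin d → ℝ),
        (β ≤ ∑ i, α i * x i) ∧ (∀ a ∈ A, ∑ i, α i * y a i = β) ∧
        v = (∑ b ∈ B, ω b * lpNorm pB (x - b)) +
          ∑ a ∈ A, ω a * (lpNorm pB (x - y a) + lpNorm pA (y a - a))}) :
    (⨅ x : Fin d → ℝ,
        ((∑ a ∈ A, ω a * mixDist pA pB α β x a) +
          ∑ b ∈ B, ω b * mixDist pA pB α β x b)) = min vA vB ∧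
    ∀ x : Fin d → ℝ,
      (∀ y : Fin d → ℝ,
        (∑ a ∈ A, ω a * mixDist pA pB α β x a) + ∑ b ∈ B, ω b * mixDist pA pB α β x b ≤
          (∑ a ∈ A, ω a * mixDist pA pB α β y a) + ∑ b ∈ B, ω b * mixDist pA pB α β y b) →
      ((∑ i, α i * x i ≤ β ∧
          ∃ y : (Fin d → ℝ) → Fin d → ℝ, (∀ b ∈ B, ∑ i, α i * y b i = β) ∧
            (∑ a ∈ A, ω a * lpNorm pA (x - a)) +
              (∑ b ∈ B, ω b * (lpNorm pA (x - y b) + lpNorm pB (y b - b))) = min vA vB) ∨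
        (β ≤ ∑ i, α i * x i ∧
          ∃ y : (Fin d → ℝ) → Fin d → ℝ, (∀ a ∈ A, ∑ i, α i * y a i = β) ∧
            (∑ b ∈ B, ω b * lpNorm pB (x - b)) +
              (∑ a ∈ A, ω a * (lpNorm pB (x - y a) + lpNorm pA (y a - a))) = min vA vB)) := by
  have : Fact (1 ≤ pB) := ⟨hpB⟩
  have : Fact (1 ≤ pA) := ⟨hpB.trans hBA⟩
  obtain ⟨z, hz⟩ := exists_mem_hyperplane hα β
  have hrep := exists_gatewayCost_eq_mixCost (pA := pA) (pB := pB) (ω := ω) hα hAH hBH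
  have hωA' a ha := (hωA a ha).le
  have hωB' b hb := (hωB b hb).le
  have hval : ⨅ x, mixCost pA pB α β A B ω x = min vA vB := by
    rw [hvA, hvB]
    refine iInf_eq_min_csInf_of_forall_mem_union ⟨_, z, fun _ => z, hz.le, fun _ _ => hz, rfl⟩
      ⟨_, z, fun _ => z, hz.ge, fun _ _ => hz, rfl⟩
      ⟨0, by rintro v ⟨x, y, -, -, rfl⟩; exact gatewayCost_nonneg hωA' hωB'⟩
      ⟨0, by rintro v ⟨x, y, -, -, rfl⟩; exact gatewayCost_nonneg hωB' hωA'⟩ (fun x => ?_) ?_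
    · rcases hrep x with ⟨hx, y, hy, h⟩ | ⟨hx, y, hy, h⟩
      exacts [Or.inl ⟨x, y, hx, hy, h.symm⟩, Or.inr ⟨x, y, hx, hy, h.symm⟩]
    · rintro v (⟨x, y, hx, hy, rfl⟩ | ⟨x, y, hx, hy, rfl⟩)
      exacts [⟨x, mixCost_le_gatewayCost_of_le hAH hBH hωB' hx hy⟩,
        ⟨x, mixCost_le_gatewayCost_of_ge hBA hAH hBH hωA' hωB' hx hy⟩]
  refine ⟨hval, fun x hopt => ?_⟩
  have hx : mixCost pA pB α β A B ω x = min vA vB :=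
    hval ▸ (IsLeast.csInf_eq ⟨Set.mem_range_self x, Set.forall_mem_range.2 hopt⟩).symm
  exact (hrep x).imp (fun ⟨hx', y, hy, h⟩ => ⟨hx', y, hy, h.trans hx⟩)
    fun ⟨hx', y, hy, h⟩ => ⟨hx', y, hy, h.trans hx⟩
end

section
/- Let r > s ≥ 1 be integers, set p = r/s, let X, Y ∈ ℝ^d and Z ≥ 0. Then ‖X − Y‖_p ≤ Z if and only if there exist Q, R ∈ ℝ^d such that for every k = 1,…,d: Q_k + X_k − Y_k ≥ 0, Q_k − X_k + Y_k ≥ 0, R_k ≥ 0, Q_k^r ≤ R_k^s · Z^{r−s}, and Σ_{k=1}^d R_k ≤ Z. -/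
/-!
Writing `p = r / s` and `x = X - Y`, the constraint `‖x‖_p ≤ Z` says `∑ |x_k|^p ≤ Z · Z^(p-1)`.
Such a sum bound splits into per-coordinate bounds `|x_k|^p ≤ R_k Z^(p-1)` with `∑ R_k ≤ Z`
(take `R_k = |x_k|^p / Z^(p-1)`), and raising each of these to the power `s` makes it the
polynomial inequality `|x_k|^r ≤ R_k^s Z^(r-s)`. Finally `|x_k|` is the least `Q_k` with
`Q_k ± x_k ≥ 0`, and the left side is monotone in it.
-/

open scoped ENNReal BigOperators

theorem lpNormR_le_iff {d : ℕ} {p : ℝ} (hp : 0 < p) (x : Fin d → ℝ) {Z : ℝ} (hZ : 0 ≤ Z) :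
    lpNormR p x ≤ Z ↔ ∑ k, |x k| ^ p ≤ Z ^ p := by
  rw [lpNormR, one_div]
  exact Real.rpow_inv_le_iff_of_pos
    (Finset.sum_nonneg fun k _ => Real.rpow_nonneg (abs_nonneg _) _) hZ hp

theorem sum_le_mul_iff_exists {ι : Type*} [Fintype ι] {b : ι → ℝ} (hb : ∀ k, 0 ≤ b k)
    {Z w : ℝ} (hZ : 0 ≤ Z) (hw : 0 ≤ w) :
    ∑ k, b k ≤ Z * w ↔ ∃ R : ι → ℝ, (∀ k, 0 ≤ R k ∧ b k ≤ R k * w) ∧ ∑ k, R k ≤ Z := by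
  constructor
  · intro h
    rcases hw.eq_or_lt with rfl | hw
    · have hb0 : ∀ k, b k = 0 := by
        have := (Finset.sum_eq_zero_iff_of_nonneg fun k _ => hb k).1
          (le_antisymm (by simpa using h) (Finset.sum_nonneg fun k _ => hb k))
        exact fun k => this k (Finset.mem_univ k)
      exact ⟨0, fun k => by simp [hb0 k], by simpa using hZ⟩
    · refine ⟨fun k => b k / w,
        fun k => ⟨div_nonneg (hb k) hw.le, (div_mul_cancel₀ _ hw.ne').ge⟩, ?_⟩
      rwa [← Finset.sum_div, div_le_iff₀ hw]
  · rintro ⟨R, hR, hRZ⟩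
    calc ∑ k, b k ≤ ∑ k, R k * w := Finset.sum_le_sum fun k _ => (hR k).2
      _ = (∑ k, R k) * w := (Finset.sum_mul ..).symm
      _ ≤ Z * w := mul_le_mul_of_nonneg_right hRZ hw

theorem Real.rpow_div_natCast_le_iff_pow_le {a c : ℝ} (ha : 0 ≤ a) (hc : 0 ≤ c) (r : ℕ) {s : ℕ}
    (hs : s ≠ 0) : a ^ ((r : ℝ) / s) ≤ c ↔ a ^ r ≤ c ^ s := by
  rw [← pow_le_pow_iff_left₀ (Real.rpow_nonneg ha _) hc hs, ← Real.rpow_mul_natCast ha,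
    div_mul_cancel₀ _ (Nat.cast_ne_zero.2 hs), Real.rpow_natCast]

theorem Real.mul_rpow_div_natCast_sub_one_pow {R Z : ℝ} (hZ : 0 ≤ Z) {r s : ℕ} (hs : s ≠ 0)
    (hsr : s ≤ r) : (R * Z ^ ((r : ℝ) / s - 1)) ^ s = R ^ s * Z ^ (r - s) := by
  have hexp : ((r : ℝ) / s - 1) * s = ((r - s : ℕ) : ℝ) := by
    rw [Nat.cast_sub hsr, sub_mul, div_mul_cancel₀ _ (Nat.cast_ne_zero.2 hs), one_mul]
  rw [mul_pow, ← Real.rpow_mul_natCast hZ, hexp, Real.rpow_natCast]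

theorem exists_abs_le_pow_le_iff {α : Type*} [Ring α] [LinearOrder α] [IsOrderedRing α]
    (x B : α) (n : ℕ) : (∃ q : α, 0 ≤ q + x ∧ 0 ≤ q - x ∧ q ^ n ≤ B) ↔ |x| ^ n ≤ B := by
  constructor
  · rintro ⟨q, hqx, hqx', hq⟩
    have hxq : |x| ≤ q := abs_le.2 ⟨neg_le_iff_add_nonneg'.2 hqx, sub_nonneg.1 hqx'⟩
    exact (pow_le_pow_left₀ (abs_nonneg x) hxq n).trans hq
  · intro h
    exact ⟨|x|, neg_le_iff_add_nonneg'.1 (neg_abs_le x), sub_nonneg.2 (le_abs_self x), h⟩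

/-- Representation of the `ℓ_p` norm constraint `‖X − Y‖_p ≤ Z`, for `p = r/s`
with integers `r > s ≥ 1`, by a finite system of polynomial inequalities. -/
theorem stmt_6 {d : ℕ} (r s : ℕ) (hs : 1 ≤ s) (hrs : s < r)
    (X Y : Fin d → ℝ) (Z : ℝ) (hZ : 0 ≤ Z) :
    lpNormR ((r : ℝ) / (s : ℝ)) (X - Y) ≤ Z ↔
      ∃ Q R : Fin d → ℝ,
        (∀ k, Q k + X k - Y k ≥ 0 ∧ Q k - X k + Y k ≥ 0 ∧ 0 ≤ R k ∧
          Q k ^ r ≤ R k ^ s * Z ^ (r - s)) ∧ ∑ k, R k ≤ Z := by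
  have hs0 : s ≠ 0 := by omega
  set p : ℝ := (r : ℝ) / s
  have hp : 1 < p := (one_lt_div (by positivity)).2 (by exact_mod_cast hrs)
  have hZp : Z ^ p = Z * Z ^ (p - 1) := by
    rw [← Real.rpow_one_add' hZ (by linarith), add_sub_cancel]
  calc lpNormR p (X - Y) ≤ Z ↔ ∑ k, |X k - Y k| ^ p ≤ Z * Z ^ (p - 1) := by
        rw [lpNormR_le_iff (by linarith) _ hZ, hZp]; rfl
    _ ↔ ∃ R : Fin d → ℝ, (∀ k, 0 ≤ R k ∧ |X k - Y k| ^ p ≤ R k * Z ^ (p - 1)) ∧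
          ∑ k, R k ≤ Z :=
        sum_le_mul_iff_exists (fun k => Real.rpow_nonneg (abs_nonneg _) _) hZ
          (Real.rpow_nonneg hZ _)
    _ ↔ ∃ R : Fin d → ℝ, (∀ k, 0 ≤ R k ∧ |X k - Y k| ^ r ≤ R k ^ s * Z ^ (r - s)) ∧
          ∑ k, R k ≤ Z := by
        refine exists_congr fun R => and_congr_left fun _ => forall_congr' fun k =>
          and_congr_right fun hR => ?_
        rw [Real.rpow_div_natCast_le_iff_pow_le (abs_nonneg _)
          (mul_nonneg hR (Real.rpow_nonneg hZ _)) r hs0,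
          Real.mul_rpow_div_natCast_sub_one_pow hZ hs0 hrs.le]
    _ ↔ _ := by
        rw [exists_comm]
        refine exists_congr fun R => ?_
        rw [exists_and_right]
        refine and_congr_left' ?_
        simp only [← exists_abs_le_pow_le_iff, ← exists_and_left, Classical.skolem]
        refine exists_congr fun Q => forall_congr' fun k => ?_
        rw [add_sub_assoc, sub_add, ge_iff_le, ge_iff_le]
        tauto
end

section
/- Let 1 < p < ∞ with d ≥ 2, let A ⊂ ℝ^d be a finite set whose points are not all contained in a single line, and let ω_a > 0 for each a ∈ A. Then the function x ↦ Σ_{a∈A} ω_a ‖x − a‖_p is strictly convex on ℝ^d. -/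
open Set

lemma strictConvexOn_abs_rpow {p : ℝ} (hp : 1 < p) :
    StrictConvexOn ℝ univ fun t : ℝ => |t| ^ p := by
  refine ⟨convex_univ, fun t _ s _ hts a b ha hb hab => ?_⟩
  simp only [smul_eq_mul]
  by_cases habs : |t| = |s|
  · -- then `t = -s ≠ 0`, and the combination shrinks `|s|` by the factor `|b - a| < 1`
    have ht : t = -s := (abs_eq_abs.1 habs).resolve_left hts
    have hs : 0 < |s| := abs_pos.2 fun h => hts (by simp [ht, h])
    have hlt : |a * t + b * s| < |s| := by
      rw [ht, show a * -s + b * s = (b - a) * s by ring, abs_mul]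
      exact mul_lt_of_lt_one_left hs (abs_sub_lt_iff.2 ⟨by linarith, by linarith⟩)
    calc |a * t + b * s| ^ p < |s| ^ p := by gcongr
      _ = a * |t| ^ p + b * |s| ^ p := by rw [habs, ← add_mul, hab, one_mul]
  · calc |a * t + b * s| ^ p ≤ (a * |t| + b * |s|) ^ p := by
          gcongr
          calc |a * t + b * s| ≤ |a * t| + |b * s| := abs_add_le _ _
            _ = a * |t| + b * |s| := by rw [abs_mul, abs_mul, abs_of_pos ha, abs_of_pos hb]
      _ < a * |t| ^ p + b * |s| ^ p := by
          simpa using (strictConvexOn_rpow hp).2 (abs_nonneg t) (abs_nonneg s) habs ha hb hab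

lemma strictConvexOn_sum_apply {ι : Type*} [Fintype ι] {f : ι → ℝ → ℝ}
    (hf : ∀ i, StrictConvexOn ℝ univ (f i)) :
    StrictConvexOn ℝ univ fun z : ι → ℝ => ∑ i, f i (z i) := by
  refine ⟨convex_univ, fun x _ y _ hxy a b ha hb hab => ?_⟩
  obtain ⟨i₀, hi₀⟩ := Function.ne_iff.1 hxy
  calc ∑ i, f i ((a • x + b • y) i) < ∑ i, (a * f i (x i) + b * f i (y i)) := by
        refine Finset.sum_lt_sum (fun i _ => ?_) ⟨i₀, Finset.mem_univ _, ?_⟩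
        · simpa using (hf i).convexOn.2 trivial trivial ha.le hb.le hab
        · simpa using (hf i₀).2 trivial trivial hi₀ ha hb hab
    _ = a • ∑ i, f i (x i) + b • ∑ i, f i (y i) := by
        simp only [Finset.sum_add_distrib, Finset.mul_sum, smul_eq_mul]

namespace PiLp

variable {ι : Type*} [Fintype ι] {p : ENNReal}

lemma norm_rpow_eq_sum (hp : 0 < p.toReal) (z : PiLp p fun _ : ι => ℝ) :
    ‖z‖ ^ p.toReal = ∑ i, |z i| ^ p.toReal := by
  rw [norm_eq_sum hp, one_div, Real.rpow_inv_rpow (by positivity) hp.ne']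
  simp only [Real.norm_eq_abs]

theorem strictConvexSpace_real [Fact (1 ≤ p)] (hp : 1 < p.toReal) :
    StrictConvexSpace ℝ (PiLp p fun _ : ι => ℝ) := by
  have hp₀ : 0 < p.toReal := one_pos.trans hp
  refine StrictConvexSpace.of_norm_combo_lt_one fun x y hx hy hxy => ⟨2⁻¹, 2⁻¹, by norm_num, ?_⟩
  have hx1 : ∑ i, |x i| ^ p.toReal = 1 := by rw [← norm_rpow_eq_sum hp₀, hx, Real.one_rpow]
  have hy1 : ∑ i, |y i| ^ p.toReal = 1 := by rw [← norm_rpow_eq_sum hp₀, hy, Real.one_rpow]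
  have hne : WithLp.ofLp x ≠ WithLp.ofLp y := fun h => hxy (WithLp.ofLp_injective p h)
  have hmid := (strictConvexOn_sum_apply fun _ => strictConvexOn_abs_rpow hp).2 trivial trivial
    hne (by norm_num : (0 : ℝ) < 2⁻¹) (by norm_num : (0 : ℝ) < 2⁻¹) (by norm_num)
  simp only [smul_eq_mul, hx1, hy1] at hmid
  rw [← Real.rpow_lt_one_iff' (norm_nonneg _) hp₀, norm_rpow_eq_sum hp₀]
  norm_num at hmid
  simpa using hmid

end PiLp

section Module

variable {V : Type*} [AddCommGroup V] [Module ℝ V]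

lemma smul_add_smul_sub_eq {x y c : V} {a b : ℝ} (hab : a + b = 1) :
    a • x + b • y - c = a • (x - c) + b • (y - c) := by
  linear_combination (norm := module) hab • c

lemma not_sameRay_sub_sub_of_forall_ne {x y c : V} (hxy : x ≠ y)
    (hc : ∀ t : ℝ, c ≠ x + t • (y - x)) : ¬SameRay ℝ (x - c) (y - c) := by
  intro hray
  have hx : x - c ≠ 0 := sub_ne_zero.2 fun h => hc 0 (by simp [h])
  have hy : y - c ≠ 0 := sub_ne_zero.2 fun h => hc 1 (by simp [h])
  obtain ⟨r, s, hr, hs, hrs⟩ := hray.exists_pos hx hy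
  rcases eq_or_ne r s with rfl | hne
  · exact hxy (by simpa using smul_right_injective V hr.ne' hrs)
  · refine hc (s / (s - r)) ?_
    have hsr : s - r ≠ 0 := sub_ne_zero.2 hne.symm
    apply smul_right_injective V hsr
    simp only [smul_add, smul_smul, mul_div_cancel₀ _ hsr]
    linear_combination (norm := module) hrs

end Module

section StrictConvexSpace

variable {E : Type*} [NormedAddCommGroup E] [NormedSpace ℝ E]

lemma norm_combo_sub_le (x y c : E) {a b : ℝ} (ha : 0 ≤ a) (hb : 0 ≤ b) (hab : a + b = 1) :
    ‖a • x + b • y - c‖ ≤ a * ‖x - c‖ + b * ‖y - c‖ := by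
  rw [smul_add_smul_sub_eq hab]
  refine (norm_add_le _ _).trans_eq ?_
  rw [norm_smul_of_nonneg ha, norm_smul_of_nonneg hb]

lemma norm_combo_sub_lt [StrictConvexSpace ℝ E] {x y c : E} (hxy : x ≠ y)
    (hc : ∀ t : ℝ, c ≠ x + t • (y - x)) {a b : ℝ} (ha : 0 < a) (hb : 0 < b) (hab : a + b = 1) :
    ‖a • x + b • y - c‖ < a * ‖x - c‖ + b * ‖y - c‖ := by
  have hray : ¬SameRay ℝ (a • (x - c)) (b • (y - c)) := fun h =>
    not_sameRay_sub_sub_of_forall_ne hxy hc <| by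
      simpa [ha.ne', hb.ne'] using (h.pos_smul_left (inv_pos.2 ha)).pos_smul_right (inv_pos.2 hb)
  rw [smul_add_smul_sub_eq hab]
  refine (norm_add_lt_of_not_sameRay hray).trans_eq ?_
  rw [norm_smul_of_nonneg ha.le, norm_smul_of_nonneg hb.le]

theorem strictConvexOn_sum_mul_norm_sub [StrictConvexSpace ℝ E] {ι : Type*} {s : Finset ι}
    {c : ι → E} (hc : ¬∃ u v : E, ∀ i ∈ s, ∃ t : ℝ, c i = u + t • v) {ω : ι → ℝ}
    (hω : ∀ i ∈ s, 0 < ω i) :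
    StrictConvexOn ℝ univ fun x => ∑ i ∈ s, ω i * ‖x - c i‖ := by
  refine ⟨convex_univ, fun x _ y _ hxy a b ha hb hab => ?_⟩
  obtain ⟨i₀, hi₀, hi₀x⟩ : ∃ i ∈ s, ∀ t : ℝ, c i ≠ x + t • (y - x) := by
    by_contra! h
    exact hc ⟨x, y - x, h⟩
  calc ∑ i ∈ s, ω i * ‖a • x + b • y - c i‖
      < ∑ i ∈ s, (a * (ω i * ‖x - c i‖) + b * (ω i * ‖y - c i‖)) := by
        refine Finset.sum_lt_sum (fun i hi => ?_) ⟨i₀, hi₀, ?_⟩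
        · have := mul_le_mul_of_nonneg_left (norm_combo_sub_le x y (c i) ha.le hb.le hab)
            (hω i hi).le
          linarith
        · have := mul_lt_mul_of_pos_left (norm_combo_sub_lt hxy hi₀x ha hb hab) (hω i₀ hi₀)
          linarith
    _ = a • ∑ i ∈ s, ω i * ‖x - c i‖ + b • ∑ i ∈ s, ω i * ‖y - c i‖ := by
        simp only [Finset.sum_add_distrib, Finset.mul_sum, smul_eq_mul]

end StrictConvexSpace

lemma StrictConvexOn.comp_linearEquiv {E F : Type*} [AddCommGroup E] [Module ℝ E] [AddCommGroup F]
    [Module ℝ F] {f : F → ℝ} (hf : StrictConvexOn ℝ univ f) (g : E ≃ₗ[ℝ] F) :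
    StrictConvexOn ℝ univ (f ∘ g) :=
  ⟨convex_univ, fun x _ y _ hxy a b ha hb hab => by
    simpa using hf.2 trivial trivial (g.injective.ne hxy) ha hb hab⟩

lemma lpNormR_eq_norm_toLp {d : ℕ} {p : ℝ} (hp : 0 < p) (z : Fin d → ℝ) :
    lpNormR p z = ‖WithLp.toLp (ENNReal.ofReal p) z‖ := by
  rw [PiLp.norm_eq_sum (by rwa [ENNReal.toReal_ofReal hp.le])]
  simp [lpNormR, ENNReal.toReal_ofReal hp.le]

theorem stmt_8_general {d : ℕ} (p : ℝ) (hp : 1 < p)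
    (A : Finset (Fin d → ℝ))
    (hAline : ¬ ∃ u v : Fin d → ℝ, ∀ a ∈ A, ∃ t : ℝ, a = u + t • v)
    (ω : (Fin d → ℝ) → ℝ) (hω : ∀ a ∈ A, 0 < ω a) :
    StrictConvexOn ℝ Set.univ (fun x : Fin d → ℝ => ∑ a ∈ A, ω a * lpNormR p (x - a)) := by
  have hp₀ : 0 < p := one_pos.trans hp
  have : Fact (1 ≤ ENNReal.ofReal p) := ⟨ENNReal.one_le_ofReal.2 hp.le⟩
  have : StrictConvexSpace ℝ (PiLp (ENNReal.ofReal p) fun _ : Fin d => ℝ) :=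
    PiLp.strictConvexSpace_real (by rwa [ENNReal.toReal_ofReal hp₀.le])
  have hA : ¬∃ u v : PiLp (ENNReal.ofReal p) (fun _ : Fin d => ℝ),
      ∀ a ∈ A, ∃ t : ℝ, WithLp.toLp _ a = u + t • v := by
    rintro ⟨u, v, huv⟩
    exact hAline ⟨u.ofLp, v.ofLp, fun a ha =>
      (huv a ha).imp fun t ht => by simpa using congrArg WithLp.ofLp ht⟩
  have hcomp : (fun x : Fin d → ℝ => ∑ a ∈ A, ω a * lpNormR p (x - a)) =
      (fun y => ∑ a ∈ A, ω a * ‖y - WithLp.toLp _ a‖) ∘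
        (WithLp.linearEquiv (ENNReal.ofReal p) ℝ (Fin d → ℝ)).symm := by
    ext x
    simp [lpNormR_eq_norm_toLp hp₀]
  rw [hcomp]
  exact (strictConvexOn_sum_mul_norm_sub hA hω).comp_linearEquiv _

/-- Strict convexity of the weighted sum of `ℓ_p` distances (`1 < p < ∞`) to a
finite set of non-collinear points. -/
theorem stmt_8 {d : ℕ} (hd : 2 ≤ d) (p : ℝ) (hp : 1 < p)
    (A : Finset (Fin d → ℝ))
    (hAline : ¬ ∃ u v : Fin d → ℝ, ∀ a ∈ A, ∃ t : ℝ, a = u + t • v)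
    (ω : (Fin d → ℝ) → ℝ) (hω : ∀ a ∈ A, 0 < ω a) :
    StrictConvexOn ℝ Set.univ (fun x : Fin d → ℝ => ∑ a ∈ A, ω a * lpNormR p (x - a)) :=
  stmt_8_general p hp A hAline ω hω
end

section
/- Let d = 2, equip both halfplanes and the line with the Euclidean norm ‖·‖₂, let 𝓗 = {(x₁, x₂) ∈ ℝ² : x₂ = 0}, let a = (a₁, a₂) with a₂ < 0 and b = (b₁, b₂) with b₂ > 0, and let ω_a, ω_b, ω_H > 0. If (x*, y*) ∈ 𝓗 × 𝓗 minimizes (x, y) ↦ ω_a‖x − a‖₂ + ω_H‖x − y‖₂ + ω_b‖y − b‖₂ over 𝓗 × 𝓗, then one of the following holds: (1) x* ≠ y* and ω_a |a₁ − x*₁| / ‖x* − a‖₂ = ω_b |b₁ − y*₁| / ‖y* − b‖₂ = ω_H |x*₁ − y*₁| / ‖x* − y*‖₂ (the last quantity equals ω_H); or (2) x* = y* and ω_a |a₁ − x*₁| / ‖x* − a‖₂ = ω_b |b₁ − x*₁| / ‖x* − b‖₂. -/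
open scoped ENNReal BigOperators

/-!
A point of `𝓗` is determined by its first coordinate, so the cost becomes the function
`ωa √((t - a₁)² + a₂²) + ωH |t - s| + ωb √((s - b₁)² + b₂²)` of two reals. The square roots are
smooth since `a₂, b₂ ≠ 0`, and `ω |c - t| / √((t - c)² + α)` is the absolute value of the
derivative of `ω √((u - c)² + α)` at `t`. If `x* = y*`, the kink term vanishes on the diagonal
and Fermat's rule for `t ↦ cost(t, t)` balances the two square-root derivatives. If `x* ≠ y*`,
each partial cost avoids the kink of `|t - s|`, whose slope `±ωH` must then cancel the derivative
of the adjacent square root.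
-/

lemma lpNorm_two_fin_two (x : Fin 2 → ℝ) : lpNorm 2 x = √(x 0 ^ 2 + x 1 ^ 2) := by
  rw [lpNorm, if_neg ENNReal.ofNat_ne_top, Real.sqrt_eq_rpow]
  norm_num [Fin.sum_univ_two, Real.rpow_two, sq_abs]

lemma lpNorm_two_sub_of_snd_eq_zero {x : Fin 2 → ℝ} (hx : x 1 = 0) (a : Fin 2 → ℝ) :
    lpNorm 2 (x - a) = √((x 0 - a 0) ^ 2 + a 1 ^ 2) := by
  simp [lpNorm_two_fin_two, hx]

lemma lpNorm_two_sub_eq_abs_of_snd_eq_zero {x y : Fin 2 → ℝ} (hx : x 1 = 0)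
    (hy : y 1 = 0) : lpNorm 2 (x - y) = |x 0 - y 0| := by
  simp [lpNorm_two_sub_of_snd_eq_zero hx, hy, Real.sqrt_sq_eq_abs]

lemma hasDerivAt_sqrt_sub_sq_add {c s : ℝ} (hs : 0 < s) (t : ℝ) :
    HasDerivAt (fun u => √((u - c) ^ 2 + s)) ((t - c) / √((t - c) ^ 2 + s)) t := by
  have hsq : HasDerivAt (fun u => (u - c) ^ 2 + s) (2 * (t - c)) t := by
    simpa using (((hasDerivAt_id t).sub_const c).pow 2).add_const s
  convert hsq.sqrt (by positivity) using 1
  field_simp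

lemma abs_mul_sub_div_sqrt {w : ℝ} (hw : 0 ≤ w) (c s t : ℝ) :
    |w * ((t - c) / √((t - c) ^ 2 + s))| = w * |c - t| / √((t - c) ^ 2 + s) := by
  rw [abs_mul, abs_div, abs_of_nonneg hw, abs_of_nonneg (Real.sqrt_nonneg _), abs_sub_comm,
    mul_div_assoc]

lemma abs_deriv_eq_of_forall_add_abs_le {f : ℝ → ℝ} {f' w c x : ℝ} (hf : HasDerivAt f f' x)
    (hxc : x ≠ c) (hmin : ∀ t, f x + w * |x - c| ≤ f t + w * |t - c|) : |f'| = |w| := by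
  have hg := hf.add (((hasDerivAt_abs (sub_ne_zero.2 hxc)).comp x
    ((hasDerivAt_id x).sub_const c)).const_mul w)
  have hzero := IsLocalMin.hasDerivAt_eq_zero (Filter.Eventually.of_forall hmin) hg
  rw [eq_neg_of_add_eq_zero_left hzero]
  rcases hxc.lt_or_gt with h | h
  · simp [sign_neg (sub_neg.2 h)]
  · simp [sign_pos (sub_pos.2 h)]

theorem gate_conditions_of_forall_le {c d α β ωa ωb ωH p q : ℝ} (hα : 0 < α) (hβ : 0 < β)
    (hωa : 0 < ωa) (hωb : 0 < ωb) (hωH : 0 < ωH)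
    (hmin : ∀ t s, ωa * √((p - c) ^ 2 + α) + ωH * |p - q| + ωb * √((q - d) ^ 2 + β) ≤
      ωa * √((t - c) ^ 2 + α) + ωH * |t - s| + ωb * √((s - d) ^ 2 + β)) :
    (p ≠ q ∧ ωa * |c - p| / √((p - c) ^ 2 + α) = ωH ∧
      ωb * |d - q| / √((q - d) ^ 2 + β) = ωH) ∨
    (p = q ∧ ωa * |c - p| / √((p - c) ^ 2 + α) = ωb * |d - p| / √((p - d) ^ 2 + β)) := by
  have hda := (hasDerivAt_sqrt_sub_sq_add (c := c) hα p).const_mul ωa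
  by_cases hpq : p = q
  · subst hpq
    refine Or.inr ⟨rfl, ?_⟩
    have hdb := (hasDerivAt_sqrt_sub_sq_add (c := d) hβ p).const_mul ωb
    have hzero := IsLocalMin.hasDerivAt_eq_zero
      (Filter.Eventually.of_forall fun t => by simpa using hmin t t) (hda.add hdb)
    rw [← abs_mul_sub_div_sqrt hωa.le, ← abs_mul_sub_div_sqrt hωb.le,
      eq_neg_of_add_eq_zero_left hzero, abs_neg]
  · refine Or.inl ⟨hpq, ?_, ?_⟩
    · have h := abs_deriv_eq_of_forall_add_abs_le hda hpq fun t => by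
        linarith [hmin t q]
      rwa [abs_mul_sub_div_sqrt hωa.le, abs_of_pos hωH] at h
    · have hdb := (hasDerivAt_sqrt_sub_sq_add (c := d) hβ q).const_mul ωb
      have h := abs_deriv_eq_of_forall_add_abs_le (w := ωH) hdb (Ne.symm hpq) fun s => by
        have h := hmin p s
        rw [abs_sub_comm p q, abs_sub_comm p s] at h
        linarith
      rwa [abs_mul_sub_div_sqrt hωb.le, abs_of_pos hωH] at h

/-- Snell's law in the plane when the separating line `x₂ = 0` is itself a
transit medium with weight `ω_H`: the optimal gate points `x*, y*` satisfy
either (1) `x* ≠ y*` and `ω_a sin θ_a = ω_b sin θ_b = ω_H |x*₁ − y*₁|/‖x* − y*‖₂`,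
or (2) `x* = y*` and `ω_a sin θ_a = ω_b sin θ_b`. -/
theorem stmt_10 (a b : Fin 2 → ℝ) (ha : a 1 < 0) (hb : 0 < b 1)
    (ωa ωb ωH : ℝ) (hωa : 0 < ωa) (hωb : 0 < ωb) (hωH : 0 < ωH)
    (xs ys : Fin 2 → ℝ) (hxs : xs 1 = 0) (hys : ys 1 = 0)
    (hmin : ∀ x y : Fin 2 → ℝ, x 1 = 0 → y 1 = 0 →
        ωa * lpNorm 2 (xs - a) + ωH * lpNorm 2 (xs - ys) + ωb * lpNorm 2 (ys - b) ≤
          ωa * lpNorm 2 (x - a) + ωH * lpNorm 2 (x - y) + ωb * lpNorm 2 (y - b)) :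
    (xs ≠ ys ∧
      ωa * |a 0 - xs 0| / lpNorm 2 (xs - a) = ωb * |b 0 - ys 0| / lpNorm 2 (ys - b) ∧
      ωb * |b 0 - ys 0| / lpNorm 2 (ys - b) =
        ωH * |xs 0 - ys 0| / lpNorm 2 (xs - ys)) ∨
    (xs = ys ∧
      ωa * |a 0 - xs 0| / lpNorm 2 (xs - a) = ωb * |b 0 - xs 0| / lpNorm 2 (xs - b)) := by
  have hline : ∀ t : ℝ, (![t, 0] : Fin 2 → ℝ) 1 = 0 := fun t => rfl
  have hcost : ∀ t s : ℝ, _ := fun t s => hmin ![t, 0] ![s, 0] (hline t) (hline s)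
  -- the distances along `𝓗` first, before the general formula turns them into square roots
  simp only [lpNorm_two_sub_eq_abs_of_snd_eq_zero hxs hys,
    lpNorm_two_sub_eq_abs_of_snd_eq_zero (hline _) (hline _)] at hcost ⊢
  simp only [lpNorm_two_sub_of_snd_eq_zero hxs, lpNorm_two_sub_of_snd_eq_zero hys,
    lpNorm_two_sub_of_snd_eq_zero (hline _), Matrix.cons_val_zero] at hcost ⊢
  have hxy : xs = ys ↔ xs 0 = ys 0 := by
    refine ⟨fun h => h ▸ rfl, fun h => funext fun i => ?_⟩
    fin_cases i
    exacts [h, hxs.trans hys.symm]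
  rcases gate_conditions_of_forall_le (sq_pos_of_neg ha) (sq_pos_of_pos hb) hωa hωb hωH
    hcost with ⟨hne, hA, hB⟩ | ⟨heq, hAB⟩
  · refine Or.inl ⟨mt hxy.1 hne, hA.trans hB.symm, ?_⟩
    rw [hB, mul_div_assoc, div_self (abs_ne_zero.2 (sub_ne_zero.2 hne)), mul_one]
  · exact Or.inr ⟨hxy.2 heq, hAB⟩
end
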